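/- Let g_upper, g_lower : 𝒳 → ℝ with g_lower(x) ≤ g_upper(x), let X be a random variable taking values in a finite set 𝒳, and let Y_k, Y_ℓ be rewards such that conditionally on X = x, g_lower_k(x) ≤ Y_k ≤ g_upper_k(x) and Y_ℓ ≤ g_upper_ℓ(x) almost surely. Define s(r) = max{ g_upper_ℓ(x) : x ∈ 𝒳, g_lower_k(x) ≤ r ≤ g_upper_k(x) }. Then for every r with P(Y_k = r) > 0, E[Y_ℓ | Y_k = r] ≤ s(r). -/

import Mathlib

open MeasureTheory

theorem setIntegral_div_measure_toReal_le {Ω : Type*} [MeasurableSpace Ω] {μ : Measure Ω}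
    {s : Set Ω} {f : Ω → ℝ} {c : ℝ} (hs₀ : μ s ≠ 0) (hs : μ s ≠ ⊤) (hf : IntegrableOn f s μ)
    (hfc : ∀ᵐ ω ∂μ.restrict s, f ω ≤ c) :
    (∫ ω in s, f ω ∂μ) / (μ s).toReal ≤ c := by
  rw [div_le_iff₀ (ENNReal.toReal_pos hs₀ hs)]
  calc (∫ ω in s, f ω ∂μ) ≤ ∫ _ in s, c ∂μ :=
        setIntegral_mono_ae_restrict hf (integrableOn_const hs) hfc
    _ = c * (μ s).toReal := by rw [setIntegral_const, smul_eq_mul, mul_comm, Measure.real]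

/-- Validity of the latent-source pseudo-reward construction: if conditionally on the
latent variable `X = x` the rewards satisfy `glk x ≤ Yk ≤ guk x` and `Yl ≤ gul x`, then
for every `r` with `P(Yk = r) > 0`, the conditional mean of `Yl` given `Yk = r` is at
most `s r = sup { gul x : glk x ≤ r ≤ guk x }`. -/
theorem stmt_17 {Ω 𝒳 : Type*} [MeasurableSpace Ω] [Fintype 𝒳]
    (μ : Measure Ω) [IsProbabilityMeasure μ]
    (X : Ω → 𝒳) (Yk Yl : Ω → ℝ) (hYk : Measurable Yk) (hYl : Integrable Yl μ)
    (glk guk gul : 𝒳 → ℝ)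
    (hbk : ∀ᵐ ω ∂μ, glk (X ω) ≤ Yk ω ∧ Yk ω ≤ guk (X ω))
    (hbl : ∀ᵐ ω ∂μ, Yl ω ≤ gul (X ω))
    (s : ℝ → ℝ)
    (hs : ∀ r, s r = sSup (gul '' {x : 𝒳 | glk x ≤ r ∧ r ≤ guk x})) :
    ∀ r : ℝ, 0 < μ {ω | Yk ω = r} →
      (∫ ω in {ω | Yk ω = r}, Yl ω ∂μ) / (μ {ω | Yk ω = r}).toReal ≤ s r := by
  intro r hr
  have hlevel : MeasurableSet {ω | Yk ω = r} := hYk (measurableSet_singleton r)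
  refine setIntegral_div_measure_toReal_le hr.ne' (measure_ne_top _ _) hYl.integrableOn ?_
  filter_upwards [ae_restrict_mem hlevel, ae_restrict_of_ae hbk, ae_restrict_of_ae hbl]
    with ω (hωr : Yk ω = r) hωk hωl
  rw [hωr] at hωk
  rw [hs r]
  exact hωl.trans (le_csSup (Set.toFinite _).bddAbove ⟨X ω, hωk, rfl⟩)
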